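/- There exist constants C₂' > 0 and C_h' > 0, depending only on C₂, C_h, γ and the radius of a ball containing the support of ξ (in particular independent of n, t, x), such that for all n ≥ 1, all (t,x) ∈ [0,T] × ℝ^m and all (y¹,y²,z¹,z²) ∈ ℝ^{2+2m}: |H_{1n}(t,x,y¹,y²,z¹,z²)| ≤ C₂'(1+|φ_n(x)|)|z¹| + C_h'(1+|φ_n(x)|^γ + |y¹|). That is, the cut-off mollified generators satisfy the same stochastic linear growth condition as H₁, with the state variable truncated. -/
import Mathlib


open MeasureTheory

set_option maxHeartbeats 2000000 in
set_option synthInstance.maxHeartbeats 1000000 in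
/-- `E m` is the space `ℝ^{2+2m}` of variables `u = (y¹, y², z¹, z²)`. -/
theorem mollified_generator_growth (m : ℕ) (hm : 1 ≤ m) (C₂ Ch γ T : ℝ)
    (hC₂ : 0 < C₂) (hCh : 0 < Ch) (hγ : 0 < γ) (hT : 0 < T)
    (H₁ : ℝ → EuclideanSpace ℝ (Fin m) →
      (ℝ × ℝ × EuclideanSpace ℝ (Fin m) × EuclideanSpace ℝ (Fin m)) → ℝ)
    (hH₁meas : Measurable fun p : ℝ × EuclideanSpace ℝ (Fin m) ×
        (ℝ × ℝ × EuclideanSpace ℝ (Fin m) × EuclideanSpace ℝ (Fin m)) =>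
      H₁ p.1 p.2.1 p.2.2)
    (hH₁growth : ∀ (t : ℝ) (x : EuclideanSpace ℝ (Fin m))
        (u : ℝ × ℝ × EuclideanSpace ℝ (Fin m) × EuclideanSpace ℝ (Fin m)),
      |H₁ t x u| ≤ C₂ * (1 + ‖x‖) * ‖u.2.2.1‖ + Ch * (1 + ‖x‖ ^ γ + |u.1|))
    (ξ : (ℝ × ℝ × EuclideanSpace ℝ (Fin m) × EuclideanSpace ℝ (Fin m)) → ℝ)
    (hξsmooth : ContDiff ℝ (⊤ : ℕ∞) ξ) (hξnonneg : ∀ u, 0 ≤ ξ u)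
    (hξsupp : HasCompactSupport ξ)
    (hξint : ∫ u, ξ u = 1)
    (ψ : (ℝ × ℝ × EuclideanSpace ℝ (Fin m) × EuclideanSpace ℝ (Fin m)) → ℝ)
    (hψsmooth : ContDiff ℝ (⊤ : ℕ∞) ψ) (hψ01 : ∀ u, ψ u ∈ Set.Icc (0:ℝ) 1)
    (hψone : ∀ u, ‖u‖ ≤ 1 → ψ u = 1) (hψzero : ∀ u, 2 ≤ ‖u‖ → ψ u = 0)
    (φn : ℕ → EuclideanSpace ℝ (Fin m) → EuclideanSpace ℝ (Fin m))
    (hφn : ∀ (n : ℕ) (x : EuclideanSpace ℝ (Fin m)) (j : Fin m),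
      φn n x j = min (max (x j) (-(n:ℝ))) (n:ℝ))
    (Htilde : ℕ → ℝ → EuclideanSpace ℝ (Fin m) →
      (ℝ × ℝ × EuclideanSpace ℝ (Fin m) × EuclideanSpace ℝ (Fin m)) → ℝ)
    (hHtilde : ∀ n t x u, Htilde n t x u =
      ∫ p, H₁ t (φn n x) p * ((n:ℝ) ^ (2 + 2 * m) * ξ ((n:ℝ) • (u - p))))
    (H1n : ℕ → ℝ → EuclideanSpace ℝ (Fin m) →
      (ℝ × ℝ × EuclideanSpace ℝ (Fin m) × EuclideanSpace ℝ (Fin m)) → ℝ)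
    (hH1n : ∀ n t x u, H1n n t x u = ψ ((n:ℝ)⁻¹ • u) * Htilde n t x u)
    :
    ∃ C₂' Ch' : ℝ, 0 < C₂' ∧ 0 < Ch' ∧
      ∀ n : ℕ, 1 ≤ n → ∀ t ∈ Set.Icc (0:ℝ) T, ∀ (x : EuclideanSpace ℝ (Fin m))
        (u : ℝ × ℝ × EuclideanSpace ℝ (Fin m) × EuclideanSpace ℝ (Fin m)),
        |H1n n t x u| ≤ C₂' * (1 + ‖φn n x‖) * ‖u.2.2.1‖ +
          Ch' * (1 + ‖φn n x‖ ^ γ + |u.1|) := by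
  classical
  haveI : BorelSpace (ℝ × ℝ × EuclideanSpace ℝ (Fin m) × EuclideanSpace ℝ (Fin m)) :=
    Prod.borelSpace
  haveI h1 : (volume : Measure (EuclideanSpace ℝ (Fin m) × EuclideanSpace ℝ (Fin m))).IsAddHaarMeasure :=
    Measure.prod.instIsAddHaarMeasure _ _
  haveI h2 : (volume : Measure (ℝ × EuclideanSpace ℝ (Fin m) × EuclideanSpace ℝ (Fin m))).IsAddHaarMeasure :=
    Measure.prod.instIsAddHaarMeasure _ _
  haveI h3 : (volume : Measure (ℝ × ℝ × EuclideanSpace ℝ (Fin m) × EuclideanSpace ℝ (Fin m))).IsAddHaarMeasure :=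
    Measure.prod.instIsAddHaarMeasure _ _
  obtain ⟨r, hr⟩ := hξsupp.isBounded.subset_closedBall 0
  set R : ℝ := max r 1 with hRdef
  have hR0 : (0:ℝ) < R := lt_of_lt_of_le one_pos (le_max_right _ _)
  have hRsupp : tsupport ξ ⊆ Metric.closedBall 0 R :=
    hr.trans (Metric.closedBall_subset_closedBall (le_max_left _ _))
  set Cm : ℝ := Real.sqrt m with hCmdef
  have hCm0 : (0:ℝ) ≤ Cm := Real.sqrt_nonneg _
  refine ⟨C₂, Ch + C₂ * R * (1 + Cm) + Ch * R, hC₂, by positivity, ?_⟩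
  intro n hn t ht x u
  set A := φn n x with hA
  have hN1 : (1:ℝ) ≤ (n:ℝ) := by exact_mod_cast hn
  have hN0 : (0:ℝ) < (n:ℝ) := lt_of_lt_of_le one_pos hN1
  -- coordinatewise bound on the truncation
  have hAcoord : ∀ j, |A j| ≤ (n:ℝ) := by
    intro j
    rw [hA, hφn]
    refine abs_le.2 ⟨le_min (le_max_right _ _) (by linarith), min_le_right _ _⟩
  have hAnorm : ‖A‖ ≤ (n:ℝ) * Cm := by
    rw [EuclideanSpace.norm_eq]
    have hsum : ∑ i, ‖A i‖ ^ 2 ≤ ∑ _i : Fin m, ((n:ℝ)) ^ 2 := by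
      refine Finset.sum_le_sum fun i _ => ?_
      have h := hAcoord i
      have h0 := abs_nonneg (A i)
      calc ‖A i‖ ^ 2 = |A i| ^ 2 := by rw [Real.norm_eq_abs]
        _ ≤ (n:ℝ) ^ 2 := by nlinarith
    calc Real.sqrt (∑ i, ‖A i‖ ^ 2) ≤ Real.sqrt ((m:ℝ) * (n:ℝ) ^ 2) := by
          apply Real.sqrt_le_sqrt; simpa using hsum
      _ = (n:ℝ) * Cm := by
          rw [Real.sqrt_mul (by positivity), Real.sqrt_sq hN0.le, hCmdef]; ring
  -- the dimension of the mollification space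
  have hfinrank : Module.finrank ℝ
      (ℝ × ℝ × EuclideanSpace ℝ (Fin m) × EuclideanSpace ℝ (Fin m)) = 2 + 2 * m := by
    simp [Module.finrank_prod, finrank_euclideanSpace_fin]
    ring
  set M : ℝ := C₂ * (1 + ‖A‖) * (‖u.2.2.1‖ + R / n) + Ch * (1 + ‖A‖ ^ γ + |u.1| + R / n)
    with hMdef
  have hxiInt : Integrable ξ :=
    hξsmooth.continuous.integrable_of_hasCompactSupport hξsupp
  have hint1 : Integrable (fun q : ℝ × ℝ × EuclideanSpace ℝ (Fin m) ×
      EuclideanSpace ℝ (Fin m) => ξ ((n:ℝ) • q)) :=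
    hxiInt.comp_smul (ne_of_gt hN0)
  have hswap : ∀ p : ℝ × ℝ × EuclideanSpace ℝ (Fin m) × EuclideanSpace ℝ (Fin m),
      (n:ℝ) • (u - p) = (-(n:ℝ)) • (p - u) := by
    intro p; rw [neg_smul, ← smul_neg, neg_sub]
  have hint2 : Integrable (fun p : ℝ × ℝ × EuclideanSpace ℝ (Fin m) ×
      EuclideanSpace ℝ (Fin m) => ξ ((n:ℝ) • (u - p))) := by
    simp_rw [hswap]
    exact (hxiInt.comp_smul (neg_ne_zero.2 (ne_of_gt hN0))).comp_sub_right u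
  have hmol : ∫ p, ξ ((n:ℝ) • (u - p)) = ((n:ℝ) ^ (2 + 2 * m))⁻¹ := by
    have h1 : ∫ p, ξ ((n:ℝ) • (u - p)) = ∫ q, ξ ((-(n:ℝ)) • q) := by
      simp_rw [hswap]
      exact integral_sub_right_eq_self (fun q => ξ ((-(n:ℝ)) • q)) u
    rw [h1, Measure.integral_comp_smul volume ξ (-(n:ℝ)), hξint, hfinrank, smul_eq_mul, mul_one,
      abs_inv, abs_pow, abs_neg, abs_of_pos hN0]
  have hHt : |Htilde n t x u| ≤ M := by
    rw [hHtilde]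
    have hle : ∀ p, ‖H₁ t A p * ((n:ℝ) ^ (2 + 2 * m) * ξ ((n:ℝ) • (u - p)))‖ ≤
        M * ((n:ℝ) ^ (2 + 2 * m) * ξ ((n:ℝ) • (u - p))) := by
      intro p
      by_cases hp : ξ ((n:ℝ) • (u - p)) = 0
      · simp [hp]
      · have hmem : (n:ℝ) • (u - p) ∈ tsupport ξ := subset_tsupport _ hp
        have hub : ‖(n:ℝ) • (u - p)‖ ≤ R := by
          simpa [Metric.mem_closedBall, dist_eq_norm] using hRsupp hmem
        have hup : ‖u - p‖ ≤ R / n := by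
          rw [norm_smul, Real.norm_eq_abs, abs_of_pos hN0] at hub
          rw [le_div_iff₀ hN0, mul_comm]
          exact hub
        have hfst : |u.1 - p.1| ≤ R / n := le_trans (norm_fst_le (u - p)) hup
        have h1 : |p.1| ≤ |u.1| + R / n := by
          have := abs_sub_abs_le_abs_sub p.1 u.1
          rw [abs_sub_comm p.1 u.1] at this
          linarith
        have hz : ‖u.2.2.1 - p.2.2.1‖ ≤ R / n := by
          have e1 : ‖(u - p).2.2.1‖ ≤ ‖(u - p)‖ :=
            le_trans (norm_fst_le (u - p).2.2) (le_trans (norm_snd_le (u - p).2)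
              (norm_snd_le (u - p)))
          exact le_trans e1 hup
        have h2 : ‖p.2.2.1‖ ≤ ‖u.2.2.1‖ + R / n := by
          have := norm_sub_norm_le p.2.2.1 u.2.2.1
          rw [norm_sub_rev] at this
          linarith
        have hH : |H₁ t A p| ≤ M := by
          refine le_trans (hH₁growth t A p) ?_
          rw [hMdef]
          have e1 : C₂ * (1 + ‖A‖) * ‖p.2.2.1‖ ≤ C₂ * (1 + ‖A‖) * (‖u.2.2.1‖ + R / n) :=
            mul_le_mul_of_nonneg_left h2 (by positivity)
          have e2 : Ch * (1 + ‖A‖ ^ γ + |p.1|) ≤ Ch * (1 + ‖A‖ ^ γ + |u.1| + R / n) :=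
            mul_le_mul_of_nonneg_left (by linarith) hCh.le
          linarith
        have hmolnn : (0:ℝ) ≤ (n:ℝ) ^ (2 + 2 * m) * ξ ((n:ℝ) • (u - p)) := by
          have := hξnonneg ((n:ℝ) • (u - p)); positivity
        calc ‖H₁ t A p * ((n:ℝ) ^ (2 + 2 * m) * ξ ((n:ℝ) • (u - p)))‖
            = |H₁ t A p| * ((n:ℝ) ^ (2 + 2 * m) * ξ ((n:ℝ) • (u - p))) := by
              rw [norm_mul, Real.norm_eq_abs, Real.norm_eq_abs, abs_of_nonneg hmolnn]
          _ ≤ M * ((n:ℝ) ^ (2 + 2 * m) * ξ ((n:ℝ) • (u - p))) :=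
              mul_le_mul_of_nonneg_right hH hmolnn
    have hintg : Integrable (fun p : ℝ × ℝ × EuclideanSpace ℝ (Fin m) ×
        EuclideanSpace ℝ (Fin m) =>
        M * ((n:ℝ) ^ (2 + 2 * m) * ξ ((n:ℝ) • (u - p)))) :=
      ((hint2.const_mul _).const_mul M)
    calc |∫ p, H₁ t A p * ((n:ℝ) ^ (2 + 2 * m) * ξ ((n:ℝ) • (u - p)))|
        ≤ ∫ p, M * ((n:ℝ) ^ (2 + 2 * m) * ξ ((n:ℝ) • (u - p))) :=
          norm_integral_le_of_norm_le hintg (Filter.Eventually.of_forall hle)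
      _ = M * ((n:ℝ) ^ (2 + 2 * m) * ∫ p, ξ ((n:ℝ) • (u - p))) := by
          rw [integral_const_mul, integral_const_mul]
      _ = M := by
          rw [hmol, mul_inv_cancel₀ (by positivity), mul_one]
  -- bound the cut-off factor
  have hpsi : |ψ ((n:ℝ)⁻¹ • u)| ≤ 1 := by
    have h := hψ01 ((n:ℝ)⁻¹ • u)
    rw [abs_le]; constructor <;> [linarith [h.1]; exact h.2]
  have hfinal : |H1n n t x u| ≤ M := by
    rw [hH1n, abs_mul]
    calc |ψ ((n:ℝ)⁻¹ • u)| * |Htilde n t x u| ≤ 1 * |Htilde n t x u| :=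
          mul_le_mul_of_nonneg_right hpsi (abs_nonneg _)
      _ = |Htilde n t x u| := one_mul _
      _ ≤ M := hHt
  refine le_trans hfinal ?_
  rw [hMdef]
  have hS1 : (1:ℝ) ≤ 1 + ‖A‖ ^ γ + |u.1| := by
    have h1 : (0:ℝ) ≤ ‖A‖ ^ γ := Real.rpow_nonneg (norm_nonneg _) γ
    have h2 := abs_nonneg u.1
    linarith
  have key1 : C₂ * (1 + ‖A‖) * (R / n) ≤ C₂ * R * (1 + Cm) := by
    rw [div_eq_mul_inv]
    have h1 : 1 + ‖A‖ ≤ (n:ℝ) * (1 + Cm) := by nlinarith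
    have h2 : C₂ * (1 + ‖A‖) ≤ C₂ * ((n:ℝ) * (1 + Cm)) :=
      mul_le_mul_of_nonneg_left h1 hC₂.le
    calc C₂ * (1 + ‖A‖) * (R * ((n:ℝ))⁻¹) ≤ C₂ * ((n:ℝ) * (1 + Cm)) * (R * ((n:ℝ))⁻¹) := by
          apply mul_le_mul_of_nonneg_right h2; positivity
      _ = C₂ * R * (1 + Cm) := by field_simp
  have key2 : Ch * (R / n) ≤ Ch * R := by
    apply mul_le_mul_of_nonneg_left _ hCh.le
    rw [div_le_iff₀ hN0]
    nlinarith
  have key3 : C₂ * R * (1 + Cm) + Ch * R ≤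
      (C₂ * R * (1 + Cm) + Ch * R) * (1 + ‖A‖ ^ γ + |u.1|) := by
    have hc : (0:ℝ) ≤ C₂ * R * (1 + Cm) + Ch * R := by positivity
    have := mul_le_mul_of_nonneg_left hS1 hc
    linarith
  nlinarith [key1, key2, key3]
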